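/- arXiv:2406.19511 — 2 statements merged into one kernel-verified Lean document; each statement's English description precedes it below -/
import Mathlib

section
/- Let W be the irreducible lowest weight (g,K)-module of lowest weight ζ and let W^{cl} be the irreducible highest weight module of highest weight ζ-2. Then there exists a non-split extension of (g,K)-modules 0 → W^{cl} → E → W → 0; moreover Ext¹_{(g,K)}(W, W^{cl}) is one-dimensional. -/
/-!
An extension of `W` by `Wcl` on `Wcl × W` is block triangular, and its off-diagonal part is a
cocycle `τ = (τK, τP, τM)` with values in `W →ₗ Wcl`. `K` acts semisimply on both modules, with
the disjoint spectra `ζ + 2ℕ` on `W` and `ζ - 2 - 2ℕ` on `Wcl`, so `τK` is a coboundary. Once it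
is removed, `τP` and `τM` shift `K`-weights by `2` and `-2`. No weight of `Wcl` lies in
`ζ + 2 + 2ℕ`, so `τP = 0`, and `τM` can only be nonzero on the lowest weight vector `v`,
which it sends to the highest weight line `𝕜 ∙ w`. So every extension is a multiple of the one
given by the cocycle `F` with `F v = w` and `F = 0` on the other weight vectors. That extension
does not split: a splitting would send `v` to a vector of weight `ζ` in `Wcl`, that is to `0`,
and then `M v = 0` contradicts `F v = w ≠ 0`.
-/

open LinearMap

namespace Module.End

section CommRing

variable {R V V' : Type*} [CommRing R] [AddCommGroup V] [Module R V] [AddCommGroup V']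
  [Module R V']

theorem apply_apply_eq_smul_of_comp_sub_comp {T : Module.End R V} {T' : Module.End R V'}
    {ρ : V →ₗ[R] V'} {c : R} (h : T' ∘ₗ ρ - ρ ∘ₗ T = c • ρ) {x : V} {a : R}
    (hx : T x = a • x) : T' (ρ x) = (a + c) • ρ x := by
  have := congr($h x)
  simp only [LinearMap.sub_apply, comp_apply, hx, map_smul, LinearMap.smul_apply] at this
  linear_combination (norm := module) this

theorem apply_pow_apply_eq_smul {K X : Module.End R V} {c : R} (h : K * X - X * K = c • X)
    {x : V} {a : R} (hx : K x = a • x) (n : ℕ) : K ((X ^ n) x) = (a + n * c) • (X ^ n) x := by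
  induction n with
  | zero => simpa using hx
  | succ n ih =>
    rw [pow_succ', mul_apply, apply_apply_eq_smul_of_comp_sub_comp h ih]
    push_cast
    ring_nf

end CommRing

variable {𝕜 V V' ι : Type*} [Field 𝕜] [AddCommGroup V] [Module 𝕜 V] [AddCommGroup V']
  [Module 𝕜 V'] {T : Module.End 𝕜 V} {u : ι → V} {μ : ι → 𝕜}

theorem eq_zero_of_mem_span_eigenvectors (hu : ∀ i, T (u i) = μ i • u i) {ν : 𝕜}
    (hν : ∀ i, μ i ≠ ν) {x : V} (hx : x ∈ Submodule.span 𝕜 (Set.range u))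
    (hTx : T x = ν • x) : x = 0 := by
  have hle : Submodule.span 𝕜 (Set.range u) ≤ ⨆ (c : 𝕜) (_ : c ≠ ν), T.eigenspace c := by
    rw [Submodule.span_le]
    rintro _ ⟨i, rfl⟩
    exact Submodule.mem_iSup_of_mem (μ i)
      (Submodule.mem_iSup_of_mem (hν i) (mem_eigenspace_iff.2 (hu i)))
  simpa using (T.eigenspaces_iSupIndep ν).le_bot ⟨mem_eigenspace_iff.2 hTx, hle hx⟩

theorem mem_span_singleton_of_mem_span_eigenvectors (hu : ∀ i, T (u i) = μ i • u i) {i₀ : ι}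
    (hμ : ∀ i, i ≠ i₀ → μ i ≠ μ i₀) {x : V} (hx : x ∈ Submodule.span 𝕜 (Set.range u))
    (hTx : T x = μ i₀ • x) : x ∈ 𝕜 ∙ u i₀ := by
  have hle : Submodule.span 𝕜 (Set.range u) ≤
      (𝕜 ∙ u i₀) ⊔ Submodule.span 𝕜 (Set.range fun i : {i // i ≠ i₀} ↦ u i) := by
    rw [Submodule.span_le]
    rintro _ ⟨i, rfl⟩
    by_cases hi : i = i₀
    · exact Submodule.mem_sup_left (hi ▸ Submodule.mem_span_singleton_self _)
    · exact Submodule.mem_sup_right (Submodule.subset_span ⟨⟨i, hi⟩, rfl⟩)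
  obtain ⟨y, hy, z, hz, rfl⟩ := Submodule.mem_sup.1 (hle hx)
  obtain ⟨a, rfl⟩ := Submodule.mem_span_singleton.1 hy
  have hTz : T z = μ i₀ • z := by
    rw [map_add, map_smul, hu, smul_add, smul_comm a] at hTx
    exact add_left_cancel hTx
  rw [eq_zero_of_mem_span_eigenvectors (u := fun i : {i // i ≠ i₀} ↦ u i) (fun i ↦ hu i)
    (fun i ↦ hμ i i.2) hz hTz, add_zero]
  exact Submodule.smul_mem _ _ (Submodule.mem_span_singleton_self _)

theorem bijective_smul_one_sub (hu : ∀ i, T (u i) = μ i • u i)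
    (hspan : Submodule.span 𝕜 (Set.range u) = ⊤) {ν : 𝕜} (hν : ∀ i, μ i ≠ ν) :
    Function.Bijective (ν • 1 - T : Module.End 𝕜 V) := by
  refine ⟨(injective_iff_map_eq_zero _).2 fun x hx ↦ ?_, ?_⟩
  · refine eq_zero_of_mem_span_eigenvectors hu hν (hspan ▸ Submodule.mem_top) ?_
    exact (sub_eq_zero.1 (by simpa using hx)).symm
  · rw [← range_eq_top, eq_top_iff, ← hspan, Submodule.span_le]
    rintro _ ⟨i, rfl⟩
    refine ⟨(ν - μ i)⁻¹ • u i, ?_⟩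
    have : ν - μ i ≠ 0 := sub_ne_zero.2 (hν i).symm
    simp [hu, smul_smul, ← sub_smul, inv_mul_cancel₀ this]

theorem exists_linearMap_apply_eq (hu : ∀ i, T (u i) = μ i • u i) (hμ : Function.Injective μ)
    (hspan : Submodule.span 𝕜 (Set.range u) = ⊤) (f : ι → V') (hf : ∀ i, u i = 0 → f i = 0) :
    ∃ g : V →ₗ[𝕜] V', ∀ i, g (u i) = f i := by
  have hli : LinearIndependent 𝕜 fun i : {i // u i ≠ 0} ↦ u i :=
    T.eigenvectors_linearIndependent' (fun i : {i // u i ≠ 0} ↦ μ i)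
      (hμ.comp Subtype.val_injective) (fun i : {i // u i ≠ 0} ↦ u i)
      fun i ↦ ⟨mem_eigenspace_iff.2 (hu i), i.2⟩
  have hsp : ⊤ ≤ Submodule.span 𝕜 (Set.range fun i : {i // u i ≠ 0} ↦ u i) := by
    rw [← hspan, Submodule.span_le]
    rintro _ ⟨i, rfl⟩
    by_cases hi : u i = 0
    · simp [hi]
    · exact Submodule.subset_span ⟨⟨i, hi⟩, rfl⟩
  let b := Module.Basis.mk hli hsp
  refine ⟨b.constr 𝕜 fun i ↦ f i, fun i ↦ ?_⟩
  by_cases hi : u i = 0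
  · rw [hi, map_zero, hf i hi]
  · simpa [b] using b.constr_basis 𝕜 (fun i ↦ f i) ⟨i, hi⟩

theorem exists_comp_sub_comp_eq (hu : ∀ i, T (u i) = μ i • u i) (hμ : Function.Injective μ)
    (hspan : Submodule.span 𝕜 (Set.range u) = ⊤) {T' : Module.End 𝕜 V'}
    (hT' : ∀ i, Function.Bijective (μ i • 1 - T' : Module.End 𝕜 V')) (τ : V →ₗ[𝕜] V') :
    ∃ σ : V →ₗ[𝕜] V', σ ∘ₗ T - T' ∘ₗ σ = τ := by
  let e i := LinearEquiv.ofBijective _ (hT' i)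
  obtain ⟨σ, hσ⟩ := exists_linearMap_apply_eq hu hμ hspan (fun i ↦ (e i).symm (τ (u i)))
    fun i hi ↦ by simp [hi]
  refine ⟨σ, ext_on_range hspan fun i ↦ ?_⟩
  have := (e i).apply_symm_apply (τ (u i))
  rw [LinearEquiv.ofBijective_apply] at this
  simpa [hu, hσ] using this

end Module.End

section Sl2

variable (R : Type*) {A B : Type*} [CommRing R] [Ring A] [Algebra R A] [Ring B] [Algebra R B]

def Sl2Relations (K P M : A) : Prop :=
  P * M - M * P = K ∧ K * P - P * K = (2 : R) • P ∧ K * M - M * K = (-2 : R) • M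

variable {R}

theorem Sl2Relations.map {F : Type*} [FunLike F A B] [AlgHomClass F R A B] {K P M : A}
    (h : Sl2Relations R K P M) (f : F) :
    Sl2Relations R (f K) (f P) (f M) := by
  obtain ⟨hPM, hKP, hKM⟩ := h
  refine ⟨?_, ?_, ?_⟩ <;> simp only [← map_mul, ← map_sub, ← map_smul, hPM, hKP, hKM]

end Sl2

section BlockTriangular

variable {R V₁ V₂ : Type*} [CommRing R] [AddCommGroup V₁] [Module R V₁] [AddCommGroup V₂]
  [Module R V₂]

def blockTriangular (X₁ : Module.End R V₁) (X₂ : Module.End R V₂) (τ : V₂ →ₗ[R] V₁) :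
    Module.End R (V₁ × V₂) :=
  X₁.prodMap X₂ + inl R V₁ V₂ ∘ₗ τ ∘ₗ snd R V₁ V₂

variable {X₁ Y₁ : Module.End R V₁} {X₂ Y₂ : Module.End R V₂} {τ τ' : V₂ →ₗ[R] V₁}

@[simp]
theorem blockTriangular_apply (p : V₁ × V₂) :
    blockTriangular X₁ X₂ τ p = (X₁ p.1 + τ p.2, X₂ p.2) := by
  simp [blockTriangular]

theorem blockTriangular_comp_inl :
    blockTriangular X₁ X₂ τ ∘ₗ inl R V₁ V₂ = inl R V₁ V₂ ∘ₗ X₁ := by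
  ext x <;> simp

theorem snd_comp_blockTriangular :
    snd R V₁ V₂ ∘ₗ blockTriangular X₁ X₂ τ = X₂ ∘ₗ snd R V₁ V₂ := by
  ext p <;> simp

theorem eq_blockTriangular {X : Module.End R (V₁ × V₂)}
    (h₁ : inl R V₁ V₂ ∘ₗ X₁ = X ∘ₗ inl R V₁ V₂) (h₂ : snd R V₁ V₂ ∘ₗ X = X₂ ∘ₗ snd R V₁ V₂) :
    X = blockTriangular X₁ X₂ (fst R V₁ V₂ ∘ₗ X ∘ₗ inr R V₁ V₂) := by
  refine LinearMap.ext fun ⟨x, y⟩ ↦ ?_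
  have hx := congr($h₁ x)
  have hy := congr($h₂ (0, y))
  simp only [comp_apply, inl_apply, snd_apply] at hx hy
  rw [blockTriangular_apply, ← Prod.fst_add_snd (x, y), map_add]
  ext <;> simp [← hx, hy]

theorem blockTriangular_mul :
    blockTriangular X₁ X₂ τ * blockTriangular Y₁ Y₂ τ' =
      blockTriangular (X₁ * Y₁) (X₂ * Y₂) (X₁ ∘ₗ τ' + τ ∘ₗ Y₂) := by
  ext p <;> simp

theorem blockTriangular_sub :
    blockTriangular X₁ X₂ τ - blockTriangular Y₁ Y₂ τ' =
      blockTriangular (X₁ - Y₁) (X₂ - Y₂) (τ - τ') := by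
  ext p <;> simp

theorem smul_blockTriangular (c : R) :
    c • blockTriangular X₁ X₂ τ = blockTriangular (c • X₁) (c • X₂) (c • τ) := by
  ext p <;> simp

theorem blockTriangular_inj :
    blockTriangular X₁ X₂ τ = blockTriangular Y₁ Y₂ τ' ↔ X₁ = Y₁ ∧ X₂ = Y₂ ∧ τ = τ' := by
  refine ⟨fun h ↦ ⟨?_, ?_, ?_⟩, fun ⟨h₁, h₂, h₃⟩ ↦ h₁ ▸ h₂ ▸ h₃ ▸ rfl⟩
  · ext x; simpa using congr(($h (x, 0)).1)
  · ext y; simpa using congr(($h (0, y)).2)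
  · ext y; simpa using congr(($h (0, y)).1)

theorem blockTriangular_commutator_eq_smul_iff {Z₁ : Module.End R V₁} {Z₂ : Module.End R V₂}
    {υ : V₂ →ₗ[R] V₁} (c : R) :
    blockTriangular X₁ X₂ τ * blockTriangular Y₁ Y₂ τ' -
        blockTriangular Y₁ Y₂ τ' * blockTriangular X₁ X₂ τ = c • blockTriangular Z₁ Z₂ υ ↔
      X₁ * Y₁ - Y₁ * X₁ = c • Z₁ ∧ X₂ * Y₂ - Y₂ * X₂ = c • Z₂ ∧
        X₁ ∘ₗ τ' + τ ∘ₗ Y₂ - (Y₁ ∘ₗ τ + τ' ∘ₗ X₂) = c • υ := by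
  rw [blockTriangular_mul, blockTriangular_mul, blockTriangular_sub, smul_blockTriangular,
    blockTriangular_inj]

theorem sl2Relations_blockTriangular_iff {K₁ P₁ M₁ : Module.End R V₁}
    {K₂ P₂ M₂ : Module.End R V₂} {τK τP τM : V₂ →ₗ[R] V₁} :
    Sl2Relations R (blockTriangular K₁ K₂ τK) (blockTriangular P₁ P₂ τP)
        (blockTriangular M₁ M₂ τM) ↔
      Sl2Relations R K₁ P₁ M₁ ∧ Sl2Relations R K₂ P₂ M₂ ∧
        P₁ ∘ₗ τM + τP ∘ₗ M₂ - (M₁ ∘ₗ τP + τM ∘ₗ P₂) = τK ∧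
        K₁ ∘ₗ τP + τK ∘ₗ P₂ - (P₁ ∘ₗ τK + τP ∘ₗ K₂) = (2 : R) • τP ∧
        K₁ ∘ₗ τM + τK ∘ₗ M₂ - (M₁ ∘ₗ τK + τM ∘ₗ K₂) = (-2 : R) • τM := by
  have hPM := blockTriangular_commutator_eq_smul_iff (X₁ := P₁) (X₂ := P₂) (τ := τP)
    (Y₁ := M₁) (Y₂ := M₂) (τ' := τM) (Z₁ := K₁) (Z₂ := K₂) (υ := τK) 1
  simp only [one_smul] at hPM
  simp only [Sl2Relations, hPM, blockTriangular_commutator_eq_smul_iff]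
  tauto

theorem comp_eq_blockTriangular_comp_iff {s : V₂ →ₗ[R] V₁ × V₂}
    (hs : snd R V₁ V₂ ∘ₗ s = LinearMap.id) :
    s ∘ₗ X₂ = blockTriangular X₁ X₂ τ ∘ₗ s ↔
      (fst R V₁ V₂ ∘ₗ s) ∘ₗ X₂ - X₁ ∘ₗ (fst R V₁ V₂ ∘ₗ s) = τ := by
  have hs' (y : V₂) : (s y).2 = y := congr($hs y)
  rw [sub_eq_iff_eq_add']
  constructor
  · intro h; ext y; simpa [hs'] using congr(($h y).1)
  · intro h; ext y
    · simpa [hs'] using congr($h y)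
    · simp [hs']

def shear (c : Rˣ) (θ : V₂ →ₗ[R] V₁) : (V₁ × V₂) ≃ₗ[R] (V₁ × V₂) :=
  .ofLinearMap (((c : R) • fst R V₁ V₂ + θ ∘ₗ snd R V₁ V₂).prod (snd R V₁ V₂))
    ((((c⁻¹ : Rˣ) : R) • (fst R V₁ V₂ - θ ∘ₗ snd R V₁ V₂)).prod (snd R V₁ V₂))
    (by ext <;> simp [smul_smul]) (by ext <;> simp [smul_smul])

@[simp]
theorem shear_apply (c : Rˣ) (θ : V₂ →ₗ[R] V₁) (p : V₁ × V₂) :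
    shear c θ p = ((c : R) • p.1 + θ p.2, p.2) := rfl

theorem snd_comp_shear (c : Rˣ) (θ : V₂ →ₗ[R] V₁) :
    snd R V₁ V₂ ∘ₗ (shear c θ : V₁ × V₂ →ₗ[R] V₁ × V₂) = snd R V₁ V₂ := by
  ext <;> simp

theorem shear_comp_inl (c : Rˣ) (θ : V₂ →ₗ[R] V₁) :
    (shear c θ : V₁ × V₂ →ₗ[R] V₁ × V₂) ∘ₗ inl R V₁ V₂ = (c : R) • inl R V₁ V₂ := by
  ext <;> simp

theorem shear_comp_blockTriangular {c : Rˣ} {θ : V₂ →ₗ[R] V₁}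
    (h : (c : R) • τ + θ ∘ₗ X₂ = X₁ ∘ₗ θ + τ') :
    (shear c θ : V₁ × V₂ →ₗ[R] V₁ × V₂) ∘ₗ blockTriangular X₁ X₂ τ =
      blockTriangular X₁ X₂ τ' ∘ₗ shear c θ := by
  refine LinearMap.ext fun p ↦ Prod.ext ?_ rfl
  simpa [smul_add, smul_comm (c : R), add_assoc] using congr($h p.2)

theorem shear_comp_blockTriangular_coboundary_add (c : Rˣ) (σ₁ σ₂ ρ : V₂ →ₗ[R] V₁) :
    (shear c (σ₂ - (c : R) • σ₁) : V₁ × V₂ →ₗ[R] V₁ × V₂) ∘ₗ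
        blockTriangular X₁ X₂ (σ₁ ∘ₗ X₂ - X₁ ∘ₗ σ₁ + ρ) =
      blockTriangular X₁ X₂ (σ₂ ∘ₗ X₂ - X₁ ∘ₗ σ₂ + (c : R) • ρ) ∘ₗ
        shear c (σ₂ - (c : R) • σ₁) :=
  shear_comp_blockTriangular (by simp only [comp_sub, sub_comp, smul_comp, comp_smul]; module)

theorem conjAlgEquiv_shear_one_neg_blockTriangular (σ : V₂ →ₗ[R] V₁) :
    (shear 1 (-σ)).conjAlgEquiv R (blockTriangular X₁ X₂ τ) =
      blockTriangular X₁ X₂ (τ - (σ ∘ₗ X₂ - X₁ ∘ₗ σ)) := by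
  rw [LinearEquiv.conjAlgEquiv_apply, ← comp_assoc,
    shear_comp_blockTriangular (τ' := τ - (σ ∘ₗ X₂ - X₁ ∘ₗ σ))
      (by simp only [Units.val_one, one_smul, neg_comp, comp_neg]; abel),
    comp_assoc, LinearEquiv.comp_symm, comp_id]

end BlockTriangular

section Extension

variable {R V₁ V₂ : Type*} [CommRing R] [AddCommGroup V₁] [Module R V₁] [AddCommGroup V₂]
  [Module R V₂] {K₁ P₁ M₁ : Module.End R V₁} {K₂ P₂ M₂ : Module.End R V₂}
  {τK τP τM : V₂ →ₗ[R] V₁}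

def IsExtension (K₁ P₁ M₁ : Module.End R V₁) (K₂ P₂ M₂ : Module.End R V₂)
    (K P M : Module.End R (V₁ × V₂)) : Prop :=
  inl R V₁ V₂ ∘ₗ K₁ = K ∘ₗ inl R V₁ V₂ ∧ inl R V₁ V₂ ∘ₗ P₁ = P ∘ₗ inl R V₁ V₂ ∧
    inl R V₁ V₂ ∘ₗ M₁ = M ∘ₗ inl R V₁ V₂ ∧ snd R V₁ V₂ ∘ₗ K = K₂ ∘ₗ snd R V₁ V₂ ∧
    snd R V₁ V₂ ∘ₗ P = P₂ ∘ₗ snd R V₁ V₂ ∧ snd R V₁ V₂ ∘ₗ M = M₂ ∘ₗ snd R V₁ V₂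

def IsSplit (K₂ P₂ M₂ : Module.End R V₂) (K P M : Module.End R (V₁ × V₂)) : Prop :=
  ∃ s : V₂ →ₗ[R] V₁ × V₂, snd R V₁ V₂ ∘ₗ s = LinearMap.id ∧ s ∘ₗ K₂ = K ∘ₗ s ∧
    s ∘ₗ P₂ = P ∘ₗ s ∧ s ∘ₗ M₂ = M ∘ₗ s

theorem isExtension_blockTriangular :
    IsExtension K₁ P₁ M₁ K₂ P₂ M₂ (blockTriangular K₁ K₂ τK) (blockTriangular P₁ P₂ τP)
      (blockTriangular M₁ M₂ τM) :=
  ⟨blockTriangular_comp_inl.symm, blockTriangular_comp_inl.symm, blockTriangular_comp_inl.symm,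
    snd_comp_blockTriangular, snd_comp_blockTriangular, snd_comp_blockTriangular⟩

theorem IsExtension.exists_eq_blockTriangular {K P M : Module.End R (V₁ × V₂)}
    (h : IsExtension K₁ P₁ M₁ K₂ P₂ M₂ K P M) :
    ∃ τK τP τM : V₂ →ₗ[R] V₁, K = blockTriangular K₁ K₂ τK ∧ P = blockTriangular P₁ P₂ τP ∧
      M = blockTriangular M₁ M₂ τM :=
  ⟨_, _, _, eq_blockTriangular h.1 h.2.2.2.1, eq_blockTriangular h.2.1 h.2.2.2.2.1,
    eq_blockTriangular h.2.2.1 h.2.2.2.2.2⟩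

theorem isSplit_blockTriangular_iff :
    IsSplit K₂ P₂ M₂ (blockTriangular K₁ K₂ τK) (blockTriangular P₁ P₂ τP)
        (blockTriangular M₁ M₂ τM) ↔
      ∃ σ : V₂ →ₗ[R] V₁, σ ∘ₗ K₂ - K₁ ∘ₗ σ = τK ∧ σ ∘ₗ P₂ - P₁ ∘ₗ σ = τP ∧
        σ ∘ₗ M₂ - M₁ ∘ₗ σ = τM := by
  constructor
  · rintro ⟨s, hs, hK, hP, hM⟩
    rw [comp_eq_blockTriangular_comp_iff hs] at hK hP hM
    exact ⟨_, hK, hP, hM⟩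
  · rintro ⟨σ, hK, hP, hM⟩
    have hs : snd R V₁ V₂ ∘ₗ σ.prod LinearMap.id = LinearMap.id := snd_prod _ _
    refine ⟨σ.prod LinearMap.id, hs, ?_, ?_, ?_⟩ <;>
      rwa [comp_eq_blockTriangular_comp_iff hs, fst_prod]

end Extension

section LowestWeight

open Module.End

variable {𝕜 Wcl W : Type*} [Field 𝕜] [CharZero 𝕜] [AddCommGroup Wcl] [Module 𝕜 Wcl]
  [AddCommGroup W] [Module 𝕜 W] {Kc Pc Mc : Module.End 𝕜 Wcl} {KW PW MW : Module.End 𝕜 W}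
  {ζ : 𝕜} {v : W} {w : Wcl}

theorem bijective_smul_one_sub_of_highestWeight (hKM : Kc * Mc - Mc * Kc = (-2 : 𝕜) • Mc)
    (hKw : Kc w = (ζ - 2) • w)
    (hspan : Submodule.span 𝕜 (Set.range fun k : ℕ ↦ (Mc ^ k) w) = ⊤) (n : ℕ) :
    Function.Bijective ((ζ + n * 2) • 1 - Kc : Module.End 𝕜 Wcl) := by
  refine bijective_smul_one_sub (apply_pow_apply_eq_smul hKM hKw) hspan fun k h ↦ ?_
  have : ((k + n : ℕ) : 𝕜) + 1 = 0 := by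
    push_cast
    linear_combination -h / 2
  exact Nat.cast_add_one_ne_zero _ this

theorem eq_zero_of_apply_eq_smul_of_highestWeight (hKM : Kc * Mc - Mc * Kc = (-2 : 𝕜) • Mc)
    (hKw : Kc w = (ζ - 2) • w)
    (hspan : Submodule.span 𝕜 (Set.range fun k : ℕ ↦ (Mc ^ k) w) = ⊤) (n : ℕ) {x : Wcl}
    (hx : Kc x = (ζ + n * 2) • x) : x = 0 :=
  (bijective_smul_one_sub_of_highestWeight hKM hKw hspan n).1 <| by simp [hx]

theorem mem_span_singleton_of_apply_eq_smul_of_highestWeight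
    (hKM : Kc * Mc - Mc * Kc = (-2 : 𝕜) • Mc) (hKw : Kc w = (ζ - 2) • w)
    (hspan : Submodule.span 𝕜 (Set.range fun k : ℕ ↦ (Mc ^ k) w) = ⊤) {x : Wcl}
    (hx : Kc x = (ζ - 2) • x) : x ∈ 𝕜 ∙ w := by
  have hne (k : ℕ) (hk : k ≠ 0) : ζ - 2 + k * -2 ≠ ζ - 2 + (0 : ℕ) * -2 := fun h ↦
    hk (Nat.cast_eq_zero.1 (by linear_combination -h / 2 : (k : 𝕜) = 0))
  simpa using mem_span_singleton_of_mem_span_eigenvectors (i₀ := 0)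
    (apply_pow_apply_eq_smul hKM hKw) hne (hspan ▸ Submodule.mem_top) (by simpa using hx)

theorem injective_add_nat_mul_two : Function.Injective fun n : ℕ ↦ ζ + n * 2 := fun m n h ↦ by
  simpa using h

theorem exists_cocycle (hKP : KW * PW - PW * KW = (2 : 𝕜) • PW) (hKv : KW v = ζ • v) (hv : v ≠ 0)
    (hspanW : Submodule.span 𝕜 (Set.range fun n : ℕ ↦ (PW ^ n) v) = ⊤)
    (hKw : Kc w = (ζ - 2) • w) (hPw : Pc w = 0) :
    ∃ F : W →ₗ[𝕜] Wcl, F v = w ∧ (∀ n, F ((PW ^ (n + 1)) v) = 0) ∧ Pc ∘ₗ F = F ∘ₗ PW ∧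
      Kc ∘ₗ F - F ∘ₗ KW = (-2 : 𝕜) • F := by
  obtain ⟨F, hF⟩ := exists_linearMap_apply_eq (apply_pow_apply_eq_smul hKP hKv)
    injective_add_nat_mul_two hspanW (fun n ↦ if n = 0 then w else 0) fun n hn ↦ by
      cases n <;> simp_all
  have hFv : F v = w := by simpa using hF 0
  have hFs (n : ℕ) : F ((PW ^ (n + 1)) v) = 0 := by simpa using hF (n + 1)
  have hPW (n : ℕ) : PW ((PW ^ n) v) = (PW ^ (n + 1)) v := by rw [pow_succ', mul_apply]
  refine ⟨F, hFv, hFs, ext_on_range hspanW fun n ↦ ?_, ext_on_range hspanW fun n ↦ ?_⟩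
  · cases n
    · simpa [hFv, hPw] using (hFs 0).symm
    · simp [hPW, hFs]
  · cases n
    · simp [hFv, hKv, hKw]
      module
    · simp [apply_pow_apply_eq_smul hKP hKv, hFs]

theorem eq_zero_of_comp_sub_comp_eq_two_smul (hKP : KW * PW - PW * KW = (2 : 𝕜) • PW)
    (hKv : KW v = ζ • v) (hspanW : Submodule.span 𝕜 (Set.range fun n : ℕ ↦ (PW ^ n) v) = ⊤)
    (hKM : Kc * Mc - Mc * Kc = (-2 : 𝕜) • Mc) (hKw : Kc w = (ζ - 2) • w)
    (hspanc : Submodule.span 𝕜 (Set.range fun k : ℕ ↦ (Mc ^ k) w) = ⊤) {ρ : W →ₗ[𝕜] Wcl}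
    (h : Kc ∘ₗ ρ - ρ ∘ₗ KW = (2 : 𝕜) • ρ) : ρ = 0 :=
  ext_on_range hspanW fun n ↦ eq_zero_of_apply_eq_smul_of_highestWeight hKM hKw hspanc (n + 1) <| by
    rw [apply_apply_eq_smul_of_comp_sub_comp h (apply_pow_apply_eq_smul hKP hKv n)]
    push_cast
    ring_nf

theorem exists_eq_smul_of_comp_sub_comp_eq_neg_two_smul
    (hKP : KW * PW - PW * KW = (2 : 𝕜) • PW) (hKv : KW v = ζ • v)
    (hspanW : Submodule.span 𝕜 (Set.range fun n : ℕ ↦ (PW ^ n) v) = ⊤)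
    (hKM : Kc * Mc - Mc * Kc = (-2 : 𝕜) • Mc) (hKw : Kc w = (ζ - 2) • w)
    (hspanc : Submodule.span 𝕜 (Set.range fun k : ℕ ↦ (Mc ^ k) w) = ⊤) {F : W →ₗ[𝕜] Wcl}
    (hFv : F v = w) (hFs : ∀ n, F ((PW ^ (n + 1)) v) = 0) {ρ : W →ₗ[𝕜] Wcl}
    (h : Kc ∘ₗ ρ - ρ ∘ₗ KW = (-2 : 𝕜) • ρ) : ∃ a : 𝕜, ρ = a • F := by
  obtain ⟨a, ha⟩ := Submodule.mem_span_singleton.1 <|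
    mem_span_singleton_of_apply_eq_smul_of_highestWeight hKM hKw hspanc (x := ρ v) <| by
      rw [apply_apply_eq_smul_of_comp_sub_comp h hKv, sub_eq_add_neg]
  refine ⟨a, ext_on_range hspanW fun n ↦ ?_⟩
  cases n with
  | zero => simp [hFv, ha]
  | succ n =>
    rw [LinearMap.smul_apply, hFs, smul_zero]
    refine eq_zero_of_apply_eq_smul_of_highestWeight hKM hKw hspanc n ?_
    rw [apply_apply_eq_smul_of_comp_sub_comp h (apply_pow_apply_eq_smul hKP hKv (n + 1))]
    push_cast
    ring_nf

theorem exists_eq_coboundary_add_smul (hKP : KW * PW - PW * KW = (2 : 𝕜) • PW)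
    (hKv : KW v = ζ • v) (hspanW : Submodule.span 𝕜 (Set.range fun n : ℕ ↦ (PW ^ n) v) = ⊤)
    (hKM : Kc * Mc - Mc * Kc = (-2 : 𝕜) • Mc) (hKw : Kc w = (ζ - 2) • w)
    (hspanc : Submodule.span 𝕜 (Set.range fun k : ℕ ↦ (Mc ^ k) w) = ⊤) {F : W →ₗ[𝕜] Wcl}
    (hFv : F v = w) (hFs : ∀ n, F ((PW ^ (n + 1)) v) = 0) {τK τP τM : W →ₗ[𝕜] Wcl}
    (hE : Sl2Relations 𝕜 (blockTriangular Kc KW τK) (blockTriangular Pc PW τP)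
      (blockTriangular Mc MW τM)) :
    ∃ (σ : W →ₗ[𝕜] Wcl) (a : 𝕜), σ ∘ₗ KW - Kc ∘ₗ σ = τK ∧ σ ∘ₗ PW - Pc ∘ₗ σ = τP ∧
      σ ∘ₗ MW - Mc ∘ₗ σ + a • F = τM := by
  obtain ⟨σ, hσ⟩ := exists_comp_sub_comp_eq (apply_pow_apply_eq_smul hKP hKv)
    injective_add_nat_mul_two hspanW (bijective_smul_one_sub_of_highestWeight hKM hKw hspanc) τK
  -- Conjugating by `(x, y) ↦ (x - σ y, y)` kills the `K`-component of the cocycle.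
  have hE' := hE.map ((shear 1 (-σ)).conjAlgEquiv 𝕜)
  simp only [conjAlgEquiv_shear_one_neg_blockTriangular, hσ, sub_self] at hE'
  obtain ⟨-, -, -, hKP', hKM'⟩ := sl2Relations_blockTriangular_iff.1 hE'
  simp only [zero_comp, comp_zero, add_zero, zero_add] at hKP' hKM'
  have hP := eq_zero_of_comp_sub_comp_eq_two_smul hKP hKv hspanW hKM hKw hspanc hKP'
  obtain ⟨a, hM⟩ :=
    exists_eq_smul_of_comp_sub_comp_eq_neg_two_smul hKP hKv hspanW hKM hKw hspanc hFv hFs hKM'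
  exact ⟨σ, a, hσ, (sub_eq_zero.1 hP).symm, by rw [← hM]; abel⟩

theorem exists_eq_blockTriangular_of_not_isSplit (hKP : KW * PW - PW * KW = (2 : 𝕜) • PW)
    (hKv : KW v = ζ • v) (hspanW : Submodule.span 𝕜 (Set.range fun n : ℕ ↦ (PW ^ n) v) = ⊤)
    (hKM : Kc * Mc - Mc * Kc = (-2 : 𝕜) • Mc) (hKw : Kc w = (ζ - 2) • w)
    (hspanc : Submodule.span 𝕜 (Set.range fun k : ℕ ↦ (Mc ^ k) w) = ⊤) {F : W →ₗ[𝕜] Wcl}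
    (hFv : F v = w) (hFs : ∀ n, F ((PW ^ (n + 1)) v) = 0) {KE PE ME : Module.End 𝕜 (Wcl × W)}
    (hE : Sl2Relations 𝕜 KE PE ME) (he : IsExtension Kc Pc Mc KW PW MW KE PE ME)
    (hns : ¬IsSplit KW PW MW KE PE ME) :
    ∃ (σ : W →ₗ[𝕜] Wcl) (a : 𝕜), a ≠ 0 ∧ KE = blockTriangular Kc KW (σ ∘ₗ KW - Kc ∘ₗ σ) ∧
      PE = blockTriangular Pc PW (σ ∘ₗ PW - Pc ∘ₗ σ) ∧
      ME = blockTriangular Mc MW (σ ∘ₗ MW - Mc ∘ₗ σ + a • F) := by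
  obtain ⟨τK, τP, τM, rfl, rfl, rfl⟩ := he.exists_eq_blockTriangular
  obtain ⟨σ, a, rfl, rfl, rfl⟩ :=
    exists_eq_coboundary_add_smul hKP hKv hspanW hKM hKw hspanc hFv hFs hE
  refine ⟨σ, a, fun ha ↦ hns ?_, rfl, rfl, rfl⟩
  exact isSplit_blockTriangular_iff.2 ⟨σ, rfl, rfl, by simp [ha]⟩

theorem exists_equiv_of_not_isSplit (hKP : KW * PW - PW * KW = (2 : 𝕜) • PW)
    (hKv : KW v = ζ • v) (hv : v ≠ 0)
    (hspanW : Submodule.span 𝕜 (Set.range fun n : ℕ ↦ (PW ^ n) v) = ⊤)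
    (hKM : Kc * Mc - Mc * Kc = (-2 : 𝕜) • Mc) (hKw : Kc w = (ζ - 2) • w) (hPw : Pc w = 0)
    (hspanc : Submodule.span 𝕜 (Set.range fun k : ℕ ↦ (Mc ^ k) w) = ⊤)
    {KE₁ PE₁ ME₁ KE₂ PE₂ ME₂ : Module.End 𝕜 (Wcl × W)}
    (hE₁ : Sl2Relations 𝕜 KE₁ PE₁ ME₁) (hE₂ : Sl2Relations 𝕜 KE₂ PE₂ ME₂)
    (he₁ : IsExtension Kc Pc Mc KW PW MW KE₁ PE₁ ME₁)
    (he₂ : IsExtension Kc Pc Mc KW PW MW KE₂ PE₂ ME₂)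
    (hns₁ : ¬IsSplit KW PW MW KE₁ PE₁ ME₁) (hns₂ : ¬IsSplit KW PW MW KE₂ PE₂ ME₂) :
    ∃ (c : 𝕜) (φ : (Wcl × W) ≃ₗ[𝕜] (Wcl × W)), c ≠ 0 ∧
      (φ : Wcl × W →ₗ[𝕜] Wcl × W) ∘ₗ KE₁ = KE₂ ∘ₗ (φ : Wcl × W →ₗ[𝕜] Wcl × W) ∧
      (φ : Wcl × W →ₗ[𝕜] Wcl × W) ∘ₗ PE₁ = PE₂ ∘ₗ (φ : Wcl × W →ₗ[𝕜] Wcl × W) ∧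
      (φ : Wcl × W →ₗ[𝕜] Wcl × W) ∘ₗ ME₁ = ME₂ ∘ₗ (φ : Wcl × W →ₗ[𝕜] Wcl × W) ∧
      LinearMap.snd 𝕜 Wcl W ∘ₗ (φ : Wcl × W →ₗ[𝕜] Wcl × W) = LinearMap.snd 𝕜 Wcl W ∧
      (φ : Wcl × W →ₗ[𝕜] Wcl × W) ∘ₗ LinearMap.inl 𝕜 Wcl W = c • LinearMap.inl 𝕜 Wcl W := by
  obtain ⟨F, hFv, hFs, -, -⟩ := exists_cocycle hKP hKv hv hspanW hKw hPw
  obtain ⟨σ₁, a₁, ha₁, rfl, rfl, rfl⟩ := exists_eq_blockTriangular_of_not_isSplit hKP hKv hspanW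
    hKM hKw hspanc hFv hFs hE₁ he₁ hns₁
  obtain ⟨σ₂, a₂, ha₂, rfl, rfl, rfl⟩ := exists_eq_blockTriangular_of_not_isSplit hKP hKv hspanW
    hKM hKw hspanc hFv hFs hE₂ he₂ hns₂
  let c := Units.mk0 (a₂ / a₁) (div_ne_zero ha₂ ha₁)
  have hc : (c : 𝕜) • a₁ • F = a₂ • F := by
    rw [smul_smul, Units.val_mk0, div_mul_cancel₀ _ ha₁]
  refine ⟨c, shear c (σ₂ - (c : 𝕜) • σ₁), c.ne_zero, ?_, ?_, ?_, snd_comp_shear _ _,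
    shear_comp_inl _ _⟩
  · simpa only [add_zero, smul_zero] using shear_comp_blockTriangular_coboundary_add c σ₁ σ₂ 0
  · simpa only [add_zero, smul_zero] using shear_comp_blockTriangular_coboundary_add c σ₁ σ₂ 0
  · rw [← hc]
    exact shear_comp_blockTriangular_coboundary_add c σ₁ σ₂ (a₁ • F)

theorem exists_sl2Relations_isExtension_not_isSplit (hc : Sl2Relations 𝕜 Kc Pc Mc)
    (hW : Sl2Relations 𝕜 KW PW MW) (hKv : KW v = ζ • v) (hMv : MW v = 0) (hv : v ≠ 0)
    (hspanW : Submodule.span 𝕜 (Set.range fun n : ℕ ↦ (PW ^ n) v) = ⊤)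
    (hKw : Kc w = (ζ - 2) • w) (hPw : Pc w = 0) (hw : w ≠ 0)
    (hspanc : Submodule.span 𝕜 (Set.range fun k : ℕ ↦ (Mc ^ k) w) = ⊤) :
    ∃ KE PE ME : Module.End 𝕜 (Wcl × W), Sl2Relations 𝕜 KE PE ME ∧
      IsExtension Kc Pc Mc KW PW MW KE PE ME ∧ ¬IsSplit KW PW MW KE PE ME := by
  obtain ⟨F, hFv, -, hFP, hFK⟩ := exists_cocycle hW.2.1 hKv hv hspanW hKw hPw
  refine ⟨blockTriangular Kc KW 0, blockTriangular Pc PW 0, blockTriangular Mc MW F,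
    sl2Relations_blockTriangular_iff.2 ⟨hc, hW, ?_, ?_, ?_⟩, isExtension_blockTriangular, ?_⟩
  · simp [hFP]
  · simp
  · simpa using hFK
  rw [isSplit_blockTriangular_iff]
  rintro ⟨σ, hσK, -, hσM⟩
  have hσv : σ v = 0 := eq_zero_of_apply_eq_smul_of_highestWeight hc.2.2 hKw hspanc 0
    (sub_eq_zero.1 (by simpa [hKv] using congr($hσK v))).symm
  exact hw (by simpa [hMv, hσv, hFv] using congr($hσM v).symm)

end LowestWeight

theorem exists_nonsplit_extension_and_ext_one_dimensional_general
    {Wcl W : Type*} [AddCommGroup Wcl] [Module ℂ Wcl] [AddCommGroup W] [Module ℂ W]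
    (Kc Pc Mc : Module.End ℂ Wcl) (KW PW MW : Module.End ℂ W)
    (hc1 : Pc * Mc - Mc * Pc = Kc) (hc2 : Kc * Pc - Pc * Kc = (2 : ℂ) • Pc)
    (hc3 : Kc * Mc - Mc * Kc = (-2 : ℂ) • Mc)
    (hW1 : PW * MW - MW * PW = KW) (hW2 : KW * PW - PW * KW = (2 : ℂ) • PW)
    (hW3 : KW * MW - MW * KW = (-2 : ℂ) • MW)
    -- W is the irreducible lowest weight module of lowest weight ζ:
    (ζ : ℂ) (v : W) (hKv : KW v = ζ • v) (hMv : MW v = 0) (hv : v ≠ 0)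
    (hgenW : ∀ w : W, w ∈ Submodule.span ℂ (Set.range fun n : ℕ => (PW ^ n) v))
    -- Wcl is the irreducible highest weight module of highest weight ζ - 2:
    (w : Wcl) (hKw : Kc w = (ζ - 2) • w) (hPw : Pc w = 0) (hw : w ≠ 0)
    (hgenc : ∀ x : Wcl, x ∈ Submodule.span ℂ (Set.range fun n : ℕ => (Mc ^ n) w)) :
    -- (1) there exists a non-split extension 0 → Wcl → E → W → 0:
    (∃ KE PE ME : Module.End ℂ (Wcl × W),
      PE * ME - ME * PE = KE ∧ KE * PE - PE * KE = (2 : ℂ) • PE ∧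
        KE * ME - ME * KE = (-2 : ℂ) • ME ∧
      (LinearMap.inl ℂ Wcl W) ∘ₗ Kc = KE ∘ₗ (LinearMap.inl ℂ Wcl W) ∧
      (LinearMap.inl ℂ Wcl W) ∘ₗ Pc = PE ∘ₗ (LinearMap.inl ℂ Wcl W) ∧
      (LinearMap.inl ℂ Wcl W) ∘ₗ Mc = ME ∘ₗ (LinearMap.inl ℂ Wcl W) ∧
      (LinearMap.snd ℂ Wcl W) ∘ₗ KE = KW ∘ₗ (LinearMap.snd ℂ Wcl W) ∧
      (LinearMap.snd ℂ Wcl W) ∘ₗ PE = PW ∘ₗ (LinearMap.snd ℂ Wcl W) ∧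
      (LinearMap.snd ℂ Wcl W) ∘ₗ ME = MW ∘ₗ (LinearMap.snd ℂ Wcl W) ∧
      ¬ ∃ s : W →ₗ[ℂ] Wcl × W, (LinearMap.snd ℂ Wcl W) ∘ₗ s = LinearMap.id ∧
          s ∘ₗ KW = KE ∘ₗ s ∧ s ∘ₗ PW = PE ∘ₗ s ∧ s ∘ₗ MW = ME ∘ₗ s) ∧
    -- (2) Ext¹ is one-dimensional: any two non-split extensions are equivalent
    -- after rescaling the inclusion by a nonzero scalar c:
    (∀ KE₁ PE₁ ME₁ KE₂ PE₂ ME₂ : Module.End ℂ (Wcl × W),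
      (PE₁ * ME₁ - ME₁ * PE₁ = KE₁ ∧ KE₁ * PE₁ - PE₁ * KE₁ = (2 : ℂ) • PE₁ ∧
        KE₁ * ME₁ - ME₁ * KE₁ = (-2 : ℂ) • ME₁) →
      (PE₂ * ME₂ - ME₂ * PE₂ = KE₂ ∧ KE₂ * PE₂ - PE₂ * KE₂ = (2 : ℂ) • PE₂ ∧
        KE₂ * ME₂ - ME₂ * KE₂ = (-2 : ℂ) • ME₂) →
      ((LinearMap.inl ℂ Wcl W) ∘ₗ Kc = KE₁ ∘ₗ (LinearMap.inl ℂ Wcl W) ∧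
        (LinearMap.inl ℂ Wcl W) ∘ₗ Pc = PE₁ ∘ₗ (LinearMap.inl ℂ Wcl W) ∧
        (LinearMap.inl ℂ Wcl W) ∘ₗ Mc = ME₁ ∘ₗ (LinearMap.inl ℂ Wcl W) ∧
        (LinearMap.snd ℂ Wcl W) ∘ₗ KE₁ = KW ∘ₗ (LinearMap.snd ℂ Wcl W) ∧
        (LinearMap.snd ℂ Wcl W) ∘ₗ PE₁ = PW ∘ₗ (LinearMap.snd ℂ Wcl W) ∧
        (LinearMap.snd ℂ Wcl W) ∘ₗ ME₁ = MW ∘ₗ (LinearMap.snd ℂ Wcl W)) →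
      ((LinearMap.inl ℂ Wcl W) ∘ₗ Kc = KE₂ ∘ₗ (LinearMap.inl ℂ Wcl W) ∧
        (LinearMap.inl ℂ Wcl W) ∘ₗ Pc = PE₂ ∘ₗ (LinearMap.inl ℂ Wcl W) ∧
        (LinearMap.inl ℂ Wcl W) ∘ₗ Mc = ME₂ ∘ₗ (LinearMap.inl ℂ Wcl W) ∧
        (LinearMap.snd ℂ Wcl W) ∘ₗ KE₂ = KW ∘ₗ (LinearMap.snd ℂ Wcl W) ∧
        (LinearMap.snd ℂ Wcl W) ∘ₗ PE₂ = PW ∘ₗ (LinearMap.snd ℂ Wcl W) ∧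
        (LinearMap.snd ℂ Wcl W) ∘ₗ ME₂ = MW ∘ₗ (LinearMap.snd ℂ Wcl W)) →
      (¬ ∃ s : W →ₗ[ℂ] Wcl × W, (LinearMap.snd ℂ Wcl W) ∘ₗ s = LinearMap.id ∧
          s ∘ₗ KW = KE₁ ∘ₗ s ∧ s ∘ₗ PW = PE₁ ∘ₗ s ∧ s ∘ₗ MW = ME₁ ∘ₗ s) →
      (¬ ∃ s : W →ₗ[ℂ] Wcl × W, (LinearMap.snd ℂ Wcl W) ∘ₗ s = LinearMap.id ∧
          s ∘ₗ KW = KE₂ ∘ₗ s ∧ s ∘ₗ PW = PE₂ ∘ₗ s ∧ s ∘ₗ MW = ME₂ ∘ₗ s) →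
      ∃ (c : ℂ) (φ : (Wcl × W) ≃ₗ[ℂ] (Wcl × W)), c ≠ 0 ∧
        (φ : Wcl × W →ₗ[ℂ] Wcl × W) ∘ₗ KE₁ = KE₂ ∘ₗ (φ : Wcl × W →ₗ[ℂ] Wcl × W) ∧
        (φ : Wcl × W →ₗ[ℂ] Wcl × W) ∘ₗ PE₁ = PE₂ ∘ₗ (φ : Wcl × W →ₗ[ℂ] Wcl × W) ∧
        (φ : Wcl × W →ₗ[ℂ] Wcl × W) ∘ₗ ME₁ = ME₂ ∘ₗ (φ : Wcl × W →ₗ[ℂ] Wcl × W) ∧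
        (LinearMap.snd ℂ Wcl W) ∘ₗ (φ : Wcl × W →ₗ[ℂ] Wcl × W)
          = LinearMap.snd ℂ Wcl W ∧
        (φ : Wcl × W →ₗ[ℂ] Wcl × W) ∘ₗ (LinearMap.inl ℂ Wcl W)
          = c • LinearMap.inl ℂ Wcl W) := by
  have hspanW := Submodule.eq_top_iff'.2 hgenW
  have hspanc := Submodule.eq_top_iff'.2 hgenc
  refine ⟨?_, fun KE₁ PE₁ ME₁ KE₂ PE₂ ME₂ hE₁ hE₂ he₁ he₂ hns₁ hns₂ ↦
    exists_equiv_of_not_isSplit hW2 hKv hv hspanW hc3 hKw hPw hspanc hE₁ hE₂ he₁ he₂ hns₁ hns₂⟩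
  obtain ⟨KE, PE, ME, ⟨hPM, hKP, hKM⟩, ⟨hiK, hiP, hiM, hsK, hsP, hsM⟩, hns⟩ :=
    exists_sl2Relations_isExtension_not_isSplit ⟨hc1, hc2, hc3⟩ ⟨hW1, hW2, hW3⟩ hKv hMv hv hspanW
      hKw hPw hw hspanc
  exact ⟨KE, PE, ME, hPM, hKP, hKM, hiK, hiP, hiM, hsK, hsP, hsM, hns⟩

/-- Let `W` be the irreducible lowest weight (𝔤,K)-module of lowest
weight `ζ` and `Wcl` the irreducible highest weight module of highest weight
`ζ - 2`.  Then there is a non-split extension `0 → Wcl → E → W → 0` of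
(𝔤,K)-modules, and moreover `Ext¹_{(𝔤,K)}(W, Wcl)` is one-dimensional: any two
non-split extensions agree up to an isomorphism of extensions and a nonzero
scalar.

(𝔤,K)-modules are modeled as ℂ-vector spaces with operators `K, P, M`
satisfying `[P,M] = K`, `[K,P] = 2P`, `[K,M] = -2M`.  Since every short exact
sequence of ℂ-vector spaces splits linearly, extensions of `W` by `Wcl` are
modeled on the carrier `Wcl × W` with `ι = inl` and `π = snd`. -/
theorem exists_nonsplit_extension_and_ext_one_dimensional
    {Wcl W : Type*} [AddCommGroup Wcl] [Module ℂ Wcl] [AddCommGroup W] [Module ℂ W]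
    (Kc Pc Mc : Module.End ℂ Wcl) (KW PW MW : Module.End ℂ W)
    (hc1 : Pc * Mc - Mc * Pc = Kc) (hc2 : Kc * Pc - Pc * Kc = (2 : ℂ) • Pc)
    (hc3 : Kc * Mc - Mc * Kc = (-2 : ℂ) • Mc)
    (hW1 : PW * MW - MW * PW = KW) (hW2 : KW * PW - PW * KW = (2 : ℂ) • PW)
    (hW3 : KW * MW - MW * KW = (-2 : ℂ) • MW)
    -- W is the irreducible lowest weight module of lowest weight ζ:
    (ζ : ℂ) (v : W) (hKv : KW v = ζ • v) (hMv : MW v = 0) (hv : v ≠ 0)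
    (hgenW : ∀ w : W, w ∈ Submodule.span ℂ (Set.range fun n : ℕ => (PW ^ n) v))
    (hirrW : ∀ U : Submodule ℂ W, (∀ x ∈ U, KW x ∈ U) → (∀ x ∈ U, PW x ∈ U) →
      (∀ x ∈ U, MW x ∈ U) → U = ⊥ ∨ U = ⊤)
    -- Wcl is the irreducible highest weight module of highest weight ζ - 2:
    (w : Wcl) (hKw : Kc w = (ζ - 2) • w) (hPw : Pc w = 0) (hw : w ≠ 0)
    (hgenc : ∀ x : Wcl, x ∈ Submodule.span ℂ (Set.range fun n : ℕ => (Mc ^ n) w))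
    (hirrc : ∀ U : Submodule ℂ Wcl, (∀ x ∈ U, Kc x ∈ U) → (∀ x ∈ U, Pc x ∈ U) →
      (∀ x ∈ U, Mc x ∈ U) → U = ⊥ ∨ U = ⊤) :
    -- (1) there exists a non-split extension 0 → Wcl → E → W → 0:
    (∃ KE PE ME : Module.End ℂ (Wcl × W),
      PE * ME - ME * PE = KE ∧ KE * PE - PE * KE = (2 : ℂ) • PE ∧
        KE * ME - ME * KE = (-2 : ℂ) • ME ∧
      (LinearMap.inl ℂ Wcl W) ∘ₗ Kc = KE ∘ₗ (LinearMap.inl ℂ Wcl W) ∧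
      (LinearMap.inl ℂ Wcl W) ∘ₗ Pc = PE ∘ₗ (LinearMap.inl ℂ Wcl W) ∧
      (LinearMap.inl ℂ Wcl W) ∘ₗ Mc = ME ∘ₗ (LinearMap.inl ℂ Wcl W) ∧
      (LinearMap.snd ℂ Wcl W) ∘ₗ KE = KW ∘ₗ (LinearMap.snd ℂ Wcl W) ∧
      (LinearMap.snd ℂ Wcl W) ∘ₗ PE = PW ∘ₗ (LinearMap.snd ℂ Wcl W) ∧
      (LinearMap.snd ℂ Wcl W) ∘ₗ ME = MW ∘ₗ (LinearMap.snd ℂ Wcl W) ∧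
      ¬ ∃ s : W →ₗ[ℂ] Wcl × W, (LinearMap.snd ℂ Wcl W) ∘ₗ s = LinearMap.id ∧
          s ∘ₗ KW = KE ∘ₗ s ∧ s ∘ₗ PW = PE ∘ₗ s ∧ s ∘ₗ MW = ME ∘ₗ s) ∧
    -- (2) Ext¹ is one-dimensional: any two non-split extensions are equivalent
    -- after rescaling the inclusion by a nonzero scalar c:
    (∀ KE₁ PE₁ ME₁ KE₂ PE₂ ME₂ : Module.End ℂ (Wcl × W),
      (PE₁ * ME₁ - ME₁ * PE₁ = KE₁ ∧ KE₁ * PE₁ - PE₁ * KE₁ = (2 : ℂ) • PE₁ ∧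
        KE₁ * ME₁ - ME₁ * KE₁ = (-2 : ℂ) • ME₁) →
      (PE₂ * ME₂ - ME₂ * PE₂ = KE₂ ∧ KE₂ * PE₂ - PE₂ * KE₂ = (2 : ℂ) • PE₂ ∧
        KE₂ * ME₂ - ME₂ * KE₂ = (-2 : ℂ) • ME₂) →
      ((LinearMap.inl ℂ Wcl W) ∘ₗ Kc = KE₁ ∘ₗ (LinearMap.inl ℂ Wcl W) ∧
        (LinearMap.inl ℂ Wcl W) ∘ₗ Pc = PE₁ ∘ₗ (LinearMap.inl ℂ Wcl W) ∧
        (LinearMap.inl ℂ Wcl W) ∘ₗ Mc = ME₁ ∘ₗ (LinearMap.inl ℂ Wcl W) ∧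
        (LinearMap.snd ℂ Wcl W) ∘ₗ KE₁ = KW ∘ₗ (LinearMap.snd ℂ Wcl W) ∧
        (LinearMap.snd ℂ Wcl W) ∘ₗ PE₁ = PW ∘ₗ (LinearMap.snd ℂ Wcl W) ∧
        (LinearMap.snd ℂ Wcl W) ∘ₗ ME₁ = MW ∘ₗ (LinearMap.snd ℂ Wcl W)) →
      ((LinearMap.inl ℂ Wcl W) ∘ₗ Kc = KE₂ ∘ₗ (LinearMap.inl ℂ Wcl W) ∧
        (LinearMap.inl ℂ Wcl W) ∘ₗ Pc = PE₂ ∘ₗ (LinearMap.inl ℂ Wcl W) ∧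
        (LinearMap.inl ℂ Wcl W) ∘ₗ Mc = ME₂ ∘ₗ (LinearMap.inl ℂ Wcl W) ∧
        (LinearMap.snd ℂ Wcl W) ∘ₗ KE₂ = KW ∘ₗ (LinearMap.snd ℂ Wcl W) ∧
        (LinearMap.snd ℂ Wcl W) ∘ₗ PE₂ = PW ∘ₗ (LinearMap.snd ℂ Wcl W) ∧
        (LinearMap.snd ℂ Wcl W) ∘ₗ ME₂ = MW ∘ₗ (LinearMap.snd ℂ Wcl W)) →
      (¬ ∃ s : W →ₗ[ℂ] Wcl × W, (LinearMap.snd ℂ Wcl W) ∘ₗ s = LinearMap.id ∧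
          s ∘ₗ KW = KE₁ ∘ₗ s ∧ s ∘ₗ PW = PE₁ ∘ₗ s ∧ s ∘ₗ MW = ME₁ ∘ₗ s) →
      (¬ ∃ s : W →ₗ[ℂ] Wcl × W, (LinearMap.snd ℂ Wcl W) ∘ₗ s = LinearMap.id ∧
          s ∘ₗ KW = KE₂ ∘ₗ s ∧ s ∘ₗ PW = PE₂ ∘ₗ s ∧ s ∘ₗ MW = ME₂ ∘ₗ s) →
      ∃ (c : ℂ) (φ : (Wcl × W) ≃ₗ[ℂ] (Wcl × W)), c ≠ 0 ∧
        (φ : Wcl × W →ₗ[ℂ] Wcl × W) ∘ₗ KE₁ = KE₂ ∘ₗ (φ : Wcl × W →ₗ[ℂ] Wcl × W) ∧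
        (φ : Wcl × W →ₗ[ℂ] Wcl × W) ∘ₗ PE₁ = PE₂ ∘ₗ (φ : Wcl × W →ₗ[ℂ] Wcl × W) ∧
        (φ : Wcl × W →ₗ[ℂ] Wcl × W) ∘ₗ ME₁ = ME₂ ∘ₗ (φ : Wcl × W →ₗ[ℂ] Wcl × W) ∧
        (LinearMap.snd ℂ Wcl W) ∘ₗ (φ : Wcl × W →ₗ[ℂ] Wcl × W)
          = LinearMap.snd ℂ Wcl W ∧
        (φ : Wcl × W →ₗ[ℂ] Wcl × W) ∘ₗ (LinearMap.inl ℂ Wcl W)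
          = c • LinearMap.inl ℂ Wcl W) :=
  exists_nonsplit_extension_and_ext_one_dimensional_general Kc Pc Mc KW PW MW hc1 hc2 hc3 hW1 hW2
    hW3 ζ v hKv hMv hv hgenW w hKw hPw hw hgenc
end

section
/- The subgroup of SL₂(ℤ) generated by e = [[1,2],[0,1]] and f = [[1,0],[2,1]] consists precisely of the matrices in SL₂(ℤ) that are congruent to the identity modulo 2 and whose diagonal entries are congruent to 1 modulo 4. -/
/-!
The congruence conditions cut out a subgroup containing `e` and `f`: modulo 4 the
product of two even off-diagonal entries vanishes, so the diagonal of a product stays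
`≡ 1`. Conversely, for `A` in it the first column `(a, c)` has `a` odd and `c` even, so
`|a| ≠ |c|`. Multiplying on the left by a power of `e` adds an even multiple of `c` to
`a`, and a power of `f` an even multiple of `a` to `c`; one of the two lowers
`|a| + |c|`. The descent stops at `c = 0`, where `det A = 1` and `a ≡ 1 mod 4` force
`A = e ^ k`.
-/

open Matrix Matrix.SpecialLinearGroup
open scoped MatrixGroups

namespace Matrix.SpecialLinearGroup

variable {R : Type*} [CommRing R]

theorem coe_zpow_of_coe_eq_upper_unipotent {u : SL(2, R)} {x : R}
    (hu : (u : Matrix (Fin 2) (Fin 2) R) = !![1, x; 0, 1]) (n : ℤ) :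
    ((u ^ n : SL(2, R)) : Matrix (Fin 2) (Fin 2) R) = !![1, n * x; 0, 1] := by
  induction n with
  | zero => simp [one_fin_two]
  | succ n ih =>
    rw [_root_.zpow_add_one, coe_mul, ih, hu, mul_fin_two]
    congrm !![?_, ?_; ?_, ?_] <;> push_cast <;> ring
  | pred n ih =>
    rw [_root_.zpow_sub_one, coe_mul, ih, coe_inv, hu, adjugate_fin_two_of, mul_fin_two]
    congrm !![?_, ?_; ?_, ?_] <;> push_cast <;> ring

theorem coe_zpow_of_coe_eq_lower_unipotent {u : SL(2, R)} {x : R}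
    (hu : (u : Matrix (Fin 2) (Fin 2) R) = !![1, 0; x, 1]) (n : ℤ) :
    ((u ^ n : SL(2, R)) : Matrix (Fin 2) (Fin 2) R) = !![1, 0; n * x, 1] := by
  induction n with
  | zero => simp [one_fin_two]
  | succ n ih =>
    rw [_root_.zpow_add_one, coe_mul, ih, hu, mul_fin_two]
    congrm !![?_, ?_; ?_, ?_] <;> push_cast <;> ring
  | pred n ih =>
    rw [_root_.zpow_sub_one, coe_mul, ih, coe_inv, hu, adjugate_fin_two_of, mul_fin_two]
    congrm !![?_, ?_; ?_, ?_] <;> push_cast <;> ring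

end Matrix.SpecialLinearGroup

def sanovSubgroup : Subgroup SL(2, ℤ) where
  carrier := {A | ∃ p q r s : ℤ,
    (A : Matrix (Fin 2) (Fin 2) ℤ) = !![4 * p + 1, 2 * q; 2 * r, 4 * s + 1]}
  one_mem' := ⟨0, 0, 0, 0, by simp [one_fin_two]⟩
  mul_mem' := by
    rintro A B ⟨p, q, r, s, hA⟩ ⟨p', q', r', s', hB⟩
    refine ⟨p + p' + 4 * p * p' + q * r', (4 * p + 1) * q' + q * (4 * s' + 1),
      r * (4 * p' + 1) + (4 * s + 1) * r', r * q' + s + s' + 4 * s * s', ?_⟩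
    rw [coe_mul, hA, hB, mul_fin_two]
    congrm !![?_, ?_; ?_, ?_] <;> ring
  inv_mem' := by
    rintro A ⟨p, q, r, s, hA⟩
    refine ⟨s, -q, -r, p, ?_⟩
    rw [coe_inv, hA, adjugate_fin_two_of]
    congrm !![?_, ?_; ?_, ?_] <;> ring

theorem mem_sanovSubgroup_iff {A : SL(2, ℤ)} :
    A ∈ sanovSubgroup ↔ A 0 0 ≡ 1 [ZMOD 4] ∧ A 1 1 ≡ 1 [ZMOD 4] ∧
      A 0 1 ≡ 0 [ZMOD 2] ∧ A 1 0 ≡ 0 [ZMOD 2] := by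
  simp only [Int.ModEq]
  constructor
  · rintro ⟨p, q, r, s, hA⟩
    simp only [hA, of_apply, cons_val', cons_val_zero, cons_val_one, empty_val', cons_val_fin_one]
    omega
  · rintro ⟨ha, hd, hb, hc⟩
    refine ⟨A 0 0 / 4, A 0 1 / 2, A 1 0 / 2, A 1 1 / 4, ?_⟩
    refine (eta_fin_two _).trans ?_
    congrm !![?_, ?_; ?_, ?_] <;> omega

theorem Int.exists_natAbs_add_two_mul_lt {x y : ℤ} (hx : x ≠ 0) (hxy : x.natAbs < y.natAbs) :
    ∃ s : ℤ, (y + 2 * s * x).natAbs < y.natAbs := by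
  rcases hx.lt_or_gt with hx | hx <;> rcases le_or_gt y 0 with hy | hy
  exacts [⟨-1, by omega⟩, ⟨1, by omega⟩, ⟨1, by omega⟩, ⟨-1, by omega⟩]

theorem closure_le_sanovSubgroup {e f : SL(2, ℤ)}
    (he : (e : Matrix (Fin 2) (Fin 2) ℤ) = !![1, 2; 0, 1])
    (hf : (f : Matrix (Fin 2) (Fin 2) ℤ) = !![1, 0; 2, 1]) :
    Subgroup.closure {e, f} ≤ sanovSubgroup := by
  rw [Subgroup.closure_le]
  rintro _ (rfl | rfl)
  exacts [⟨0, 1, 0, 0, by rw [he]; norm_num⟩, ⟨0, 0, 1, 0, by rw [hf]; norm_num⟩]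

theorem exists_eq_zpow_of_mem_sanovSubgroup {e : SL(2, ℤ)}
    (he : (e : Matrix (Fin 2) (Fin 2) ℤ) = !![1, 2; 0, 1]) {A : SL(2, ℤ)}
    (hA : A ∈ sanovSubgroup) (hc : A 1 0 = 0) : ∃ k : ℤ, A = e ^ k := by
  obtain ⟨p, q, r, s, hA⟩ := hA
  have hdet := A.det_coe
  rw [hA, det_fin_two_of] at hdet
  have hr : r = 0 := by simp [hA] at hc; omega
  have hp : p = 0 ∧ s = 0 := by
    subst hr
    rcases Int.eq_one_or_neg_one_of_mul_eq_one' (by linarith : (4 * p + 1) * (4 * s + 1) = 1)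
      with h | h <;> omega
  refine ⟨q, Subtype.ext ?_⟩
  rw [hA, coe_zpow_of_coe_eq_upper_unipotent he, hr, hp.1, hp.2]
  norm_num [mul_comm]

theorem exists_mem_closure_natAbs_mul_lt {e f : SL(2, ℤ)}
    (he : (e : Matrix (Fin 2) (Fin 2) ℤ) = !![1, 2; 0, 1])
    (hf : (f : Matrix (Fin 2) (Fin 2) ℤ) = !![1, 0; 2, 1]) {A : SL(2, ℤ)}
    (hA : A ∈ sanovSubgroup) (hc : A 1 0 ≠ 0) : ∃ g ∈ Subgroup.closure {e, f},
      ((g * A) 0 0).natAbs + ((g * A) 1 0).natAbs < (A 0 0).natAbs + (A 1 0).natAbs := by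
  obtain ⟨ha, -, -, hc2⟩ := mem_sanovSubgroup_iff.1 hA
  rw [Int.ModEq] at ha hc2
  have hne : (A 0 0).natAbs ≠ (A 1 0).natAbs := by omega
  rcases hne.lt_or_gt with h | h
  · obtain ⟨s, hs⟩ := Int.exists_natAbs_add_two_mul_lt (by omega) h
    refine ⟨f ^ s, zpow_mem (Subgroup.subset_closure (by simp)) s, ?_⟩
    have h0 : (f ^ s * A) 0 0 = A 0 0 := by
      simp [coe_zpow_of_coe_eq_lower_unipotent hf, mul_apply]
    have h1 : (f ^ s * A) 1 0 = A 1 0 + 2 * s * A 0 0 := by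
      simp [coe_zpow_of_coe_eq_lower_unipotent hf, mul_apply, -mul_eq_mul_right_iff]
      ring
    omega
  · obtain ⟨s, hs⟩ := Int.exists_natAbs_add_two_mul_lt hc h
    refine ⟨e ^ s, zpow_mem (Subgroup.subset_closure (by simp)) s, ?_⟩
    have h0 : (e ^ s * A) 0 0 = A 0 0 + 2 * s * A 1 0 := by
      simp [coe_zpow_of_coe_eq_upper_unipotent he, mul_apply, -mul_eq_mul_right_iff]
      ring
    have h1 : (e ^ s * A) 1 0 = A 1 0 := by
      simp [coe_zpow_of_coe_eq_upper_unipotent he, mul_apply]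
    omega

theorem mem_closure_of_mem_sanovSubgroup {e f : SL(2, ℤ)}
    (he : (e : Matrix (Fin 2) (Fin 2) ℤ) = !![1, 2; 0, 1])
    (hf : (f : Matrix (Fin 2) (Fin 2) ℤ) = !![1, 0; 2, 1]) {A : SL(2, ℤ)}
    (hA : A ∈ sanovSubgroup) : A ∈ Subgroup.closure {e, f} := by
  induction hn : (A 0 0).natAbs + (A 1 0).natAbs using Nat.strong_induction_on generalizing A
    with | _ n ih =>
  by_cases hc : A 1 0 = 0
  · obtain ⟨k, rfl⟩ := exists_eq_zpow_of_mem_sanovSubgroup he hA hc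
    exact zpow_mem (Subgroup.subset_closure (by simp)) k
  · obtain ⟨g, hg, hlt⟩ := exists_mem_closure_natAbs_mul_lt he hf hA hc
    have hgA := ih _ (hn ▸ hlt) (mul_mem (closure_le_sanovSubgroup he hf hg) hA) rfl
    exact (Subgroup.mul_mem_cancel_left _ hg).1 hgA

/-- The subgroup of SL₂(ℤ) generated by `e = [[1,2],[0,1]]` and
`f = [[1,0],[2,1]]` consists precisely of the matrices in SL₂(ℤ) congruent to
the identity mod 2 whose diagonal entries are congruent to 1 mod 4. -/
theorem subgroup_generated_by_e_f_description
    (e f : Matrix.SpecialLinearGroup (Fin 2) ℤ)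
    (he : (e : Matrix (Fin 2) (Fin 2) ℤ) = !![1, 2; 0, 1])
    (hf : (f : Matrix (Fin 2) (Fin 2) ℤ) = !![1, 0; 2, 1]) :
    ∀ A : Matrix.SpecialLinearGroup (Fin 2) ℤ,
      A ∈ Subgroup.closure {e, f} ↔
        ((A : Matrix (Fin 2) (Fin 2) ℤ) 0 0 ≡ 1 [ZMOD 4] ∧
         (A : Matrix (Fin 2) (Fin 2) ℤ) 1 1 ≡ 1 [ZMOD 4] ∧
         (A : Matrix (Fin 2) (Fin 2) ℤ) 0 1 ≡ 0 [ZMOD 2] ∧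
         (A : Matrix (Fin 2) (Fin 2) ℤ) 1 0 ≡ 0 [ZMOD 2]) := by
  intro A
  rw [← mem_sanovSubgroup_iff]
  exact ⟨(closure_le_sanovSubgroup he hf ·), mem_closure_of_mem_sanovSubgroup he hf⟩
end
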